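/- Let α > e^{-1} and let x ∈ 𝒳 be a solution of Wright's equation x'(t) = -α(e^{x(t-1)} - 1). Define functions p_i : (-∞,1] → ℝ recursively by p_1(t) = αt and p_{i+1}(t) = -α ∫_0^t (e^{p_i(s-1)} - 1) ds. Then for every i ≥ 1: x(t) > p_i(t) for all t < 0; x(t) < p_i(t) for all t ∈ (0,1]; and x(t) < p_i(1) for all t ≥ 0. Moreover, for each fixed i and t, the quantity |p_i(t)| is monotone increasing as a function of α. -/

import Mathlib

open Real Set Filter

noncomputable section

/-- `x` solves Wright's equation `x'(t) = -α (e^{x(t-1)} - 1)` on all of `ℝ`. -/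
def WrightSol (α : ℝ) (x : ℝ → ℝ) : Prop :=
  ∀ t : ℝ, HasDerivAt x (-α * (Real.exp (x (t - 1)) - 1)) t

/-- The space 𝒳: C¹ functions with `x 0 = 0`, `x' 0 > 0` and `x < 0` on `(-1,0)`. -/
def InX (x : ℝ → ℝ) : Prop :=
  ContDiff ℝ 1 x ∧ x 0 = 0 ∧ 0 < deriv x 0 ∧ ∀ t ∈ Set.Ioo (-1 : ℝ) 0, x t < 0

/-- A slowly oscillating periodic solution in 𝒳, with first zero `q` and data `qbar`:
positive on `(0,q)`, negative on `(q, q+qbar)`, periodic with minimal period `q+qbar`. -/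
def SOPSX (α q qbar : ℝ) (x : ℝ → ℝ) : Prop :=
  InX x ∧ WrightSol α x ∧ 1 < q ∧ 1 < qbar ∧
  (∀ t ∈ Set.Ioo 0 q, 0 < x t) ∧
  (∀ t ∈ Set.Ioo q (q + qbar), x t < 0) ∧
  Function.Periodic x (q + qbar) ∧
  (∀ T : ℝ, 0 < T → Function.Periodic x T → q + qbar ≤ T)

/-- A slowly oscillating periodic solution (up to time translation). -/
def SOPS (α : ℝ) (x : ℝ → ℝ) : Prop :=
  WrightSol α x ∧
  ∃ q qbar : ℝ, 1 < q ∧ 1 < qbar ∧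
    (∃ τ : ℝ, (∀ t ∈ Set.Ioo 0 q, 0 < x (t + τ)) ∧
      (∀ t ∈ Set.Ioo q (q + qbar), x (t + τ) < 0)) ∧
    Function.Periodic x (q + qbar) ∧
    (∀ T : ℝ, 0 < T → Function.Periodic x T → q + qbar ≤ T)

/-- Jones' iterative upper bounds: `pJones α i` corresponds to `p_{i+1}` in the paper,
so that `pJones α 0 = p_1 = α t` and
`pJones α (i+1) t = p_{i+2}(t) = -α ∫_0^t (e^{p_{i+1}(s-1)} - 1) ds`. -/
noncomputable def pJones (α : ℝ) : ℕ → ℝ → ℝ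
  | 0 => fun t => α * t
  | (i + 1) => fun t => -α * ∫ s in (0 : ℝ)..t, (Real.exp (pJones α i (s - 1)) - 1)

/-!
Since `x t = ∫₀ᵗ -α (e^{x(s-1)} - 1) ds` and the integrand is strictly decreasing in the delayed
value, a lower bound `p_i < x` on `(-∞, 0)` turns into the upper bound `x < p_{i+1}` on `(0, 1]`
and the lower bound `p_{i+1} < x` on `(-∞, 0)`; the induction starts from `x' < α`. The equation
is autonomous, so the same bounds hold after translating any zero of `x` to the origin. If `x`
reached `p_i(1)` at some `t ≥ 0`, then at a maximum point `T > 0` of `x` on `[0, t]` we would have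
`x'(T) ≥ 0`, i.e. `x(T - 1) ≤ 0`; a zero `z ∈ [T - 1, T)` then gives
`x(T) < p_i(T - z) ≤ p_i(1)`. Monotonicity in `α` is the same induction with weak inequalities,
using `p_i ≤ 0` on `(-∞, 0]`.
-/

def wrightRHS (α : ℝ) (y : ℝ → ℝ) (t : ℝ) : ℝ := -α * (exp (y (t - 1)) - 1)

theorem continuous_wrightRHS (α : ℝ) {y : ℝ → ℝ} (hy : Continuous y) :
    Continuous (wrightRHS α y) := by
  unfold wrightRHS; fun_prop

section wrightRHS

variable {α : ℝ} {y y' : ℝ → ℝ} {t : ℝ}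

theorem wrightRHS_lt (hα : 0 < α) : wrightRHS α y t < α := by
  have := exp_pos (y (t - 1))
  unfold wrightRHS; nlinarith

theorem wrightRHS_nonneg_iff (hα : 0 < α) : 0 ≤ wrightRHS α y t ↔ y (t - 1) ≤ 0 := by
  rw [show wrightRHS α y t = α * (1 - exp (y (t - 1))) by unfold wrightRHS; ring,
    mul_nonneg_iff_of_pos_left hα, sub_nonneg, exp_le_one_iff]

theorem wrightRHS_pos_iff (hα : 0 < α) : 0 < wrightRHS α y t ↔ y (t - 1) < 0 := by
  rw [show wrightRHS α y t = α * (1 - exp (y (t - 1))) by unfold wrightRHS; ring,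
    mul_pos_iff_of_pos_left hα, sub_pos, exp_lt_one_iff]

theorem wrightRHS_lt_wrightRHS (hα : 0 < α) (h : y (t - 1) < y' (t - 1)) :
    wrightRHS α y' t < wrightRHS α y t := by
  have := exp_lt_exp.2 h
  unfold wrightRHS; nlinarith

theorem wrightRHS_le_wrightRHS {α' : ℝ} (hα : 0 ≤ α) (hαα' : α ≤ α')
    (h : y' (t - 1) ≤ y (t - 1)) (hy : y (t - 1) ≤ 0) :
    wrightRHS α y t ≤ wrightRHS α' y' t := by
  have h₁ := exp_le_one_iff.2 hy
  have h₂ := exp_le_exp.2 h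
  unfold wrightRHS
  nlinarith [mul_nonneg (sub_nonneg.2 hαα') (sub_nonneg.2 h₁)]

end wrightRHS

section Comparison

variable {f g : ℝ → ℝ}

theorem integral_lt_integral_of_lt_on_Ioo (hf : Continuous f) (hg : Continuous g) {a b : ℝ}
    (hab : a < b) (h : ∀ v ∈ Ioo a b, f v < g v) : ∫ v in a..b, f v < ∫ v in a..b, g v := by
  have := intervalIntegral.intervalIntegral_pos_of_pos_on (f := fun v => g v - f v)
    ((hg.sub hf).intervalIntegrable a b) (fun v hv => sub_pos.2 (h v hv)) hab
  rwa [intervalIntegral.integral_sub (hg.intervalIntegrable a b) (hf.intervalIntegrable a b),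
    sub_pos] at this

theorem integral_from_zero_lt_of_lt (hf : Continuous f) (hg : Continuous g)
    (h : ∀ v < 1, f v < g v) :
    (∀ t < 0, ∫ v in 0..t, g v < ∫ v in 0..t, f v) ∧
      ∀ t ∈ Ioc 0 1, ∫ v in 0..t, f v < ∫ v in 0..t, g v := by
  refine ⟨fun t ht => ?_, fun t ht => ?_⟩
  · rw [intervalIntegral.integral_symm, intervalIntegral.integral_symm t, neg_lt_neg_iff]
    exact integral_lt_integral_of_lt_on_Ioo hf hg ht fun v hv => h v (by linarith [hv.2])
  · exact integral_lt_integral_of_lt_on_Ioo hf hg ht.1 fun v hv => h v (by linarith [hv.2, ht.2])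

theorem integral_from_zero_le_of_le (hf : Continuous f) (hg : Continuous g)
    (h : ∀ v ≤ 1, f v ≤ g v) :
    (∀ t ≤ 0, ∫ v in 0..t, g v ≤ ∫ v in 0..t, f v) ∧
      ∀ t ∈ Icc 0 1, ∫ v in 0..t, f v ≤ ∫ v in 0..t, g v := by
  refine ⟨fun t ht => ?_, fun t ht => ?_⟩
  · rw [intervalIntegral.integral_symm, intervalIntegral.integral_symm t, neg_le_neg_iff]
    exact intervalIntegral.integral_mono_on ht (hf.intervalIntegrable _ _)
      (hg.intervalIntegrable _ _) fun v hv => h v (by linarith [hv.2])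
  · exact intervalIntegral.integral_mono_on ht.1 (hf.intervalIntegrable _ _)
      (hg.intervalIntegrable _ _) fun v hv => h v (hv.2.trans ht.2)

end Comparison

namespace WrightSol

variable {α : ℝ} {x : ℝ → ℝ}

theorem continuous (hx : WrightSol α x) : Continuous x :=
  continuous_iff_continuousAt.2 fun t => (hx t).continuousAt

theorem comp_const_add (hx : WrightSol α x) (z : ℝ) : WrightSol α fun u => x (z + u) := by
  intro t
  have := (hx (z + t)).comp t ((hasDerivAt_id t).const_add z)
  rwa [mul_one, add_sub_assoc] at this

theorem eq_integral (hx : WrightSol α x) (hx0 : x 0 = 0) (t : ℝ) :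
    x t = ∫ v in 0..t, wrightRHS α x v := by
  rw [intervalIntegral.integral_eq_sub_of_hasDerivAt (f' := wrightRHS α x) (fun v _ => hx v)
    ((continuous_wrightRHS α hx.continuous).intervalIntegrable 0 t), hx0, sub_zero]

end WrightSol

theorem HasDerivAt.nonneg_of_isMaxOn_Icc {f : ℝ → ℝ} {a b d : ℝ} (hf : HasDerivAt f d b)
    (hab : a < b) (hmax : IsMaxOn f (Icc a b) b) : 0 ≤ d := by
  have hcone : a - b ∈ posTangentConeAt (Icc a b) b :=
    sub_mem_posTangentConeAt_of_segment_subset (by rw [segment_symm, segment_eq_Icc hab.le])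
  have := hmax.localize.hasFDerivWithinAt_nonpos hf.hasDerivWithinAt.hasFDerivWithinAt hcone
  simp only [ContinuousLinearMap.toSpanSingleton_apply, smul_eq_mul] at this
  nlinarith

section pJones

variable {α : ℝ}

theorem pJones_succ (α : ℝ) (i : ℕ) (t : ℝ) :
    pJones α (i + 1) t = ∫ v in 0..t, wrightRHS α (pJones α i) v := by
  simp only [pJones, wrightRHS, intervalIntegral.integral_const_mul]

theorem pJones_apply_zero (α : ℝ) (i : ℕ) : pJones α i 0 = 0 := by
  cases i <;> simp [pJones]

theorem continuous_pJones (α : ℝ) : ∀ i, Continuous (pJones α i)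
  | 0 => continuous_const.mul continuous_id
  | i + 1 => by
    rw [funext (pJones_succ α i)]
    exact intervalIntegral.continuous_primitive
      (continuous_wrightRHS α (continuous_pJones α i)).intervalIntegrable 0

theorem pJones_neg (hα : 0 < α) : ∀ i, ∀ t < 0, pJones α i t < 0
  | 0, t, ht => mul_neg_of_pos_of_neg hα ht
  | i + 1, t, ht => by
    simpa [pJones_succ] using (integral_from_zero_lt_of_lt continuous_const
      (continuous_wrightRHS α (continuous_pJones α i))
      fun v hv => (wrightRHS_pos_iff hα).2 (pJones_neg hα i _ (by linarith))).1 t ht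

theorem pJones_nonpos (hα : 0 < α) (i : ℕ) {t : ℝ} (ht : t ≤ 0) : pJones α i t ≤ 0 := by
  rcases ht.lt_or_eq with ht | rfl
  · exact (pJones_neg hα i t ht).le
  · exact (pJones_apply_zero α i).le

theorem pJones_pos (hα : 0 < α) : ∀ i, ∀ t ∈ Ioc (0 : ℝ) 1, 0 < pJones α i t
  | 0, t, ht => mul_pos hα ht.1
  | i + 1, t, ht => by
    simpa [pJones_succ] using (integral_from_zero_lt_of_lt continuous_const
      (continuous_wrightRHS α (continuous_pJones α i))
      fun v hv => (wrightRHS_pos_iff hα).2 (pJones_neg hα i _ (by linarith))).2 t ht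

theorem pJones_le_pJones_one (hα : 0 < α) (i : ℕ) {t : ℝ} (ht : t ∈ Icc (0 : ℝ) 1) :
    pJones α i t ≤ pJones α i 1 := by
  cases i with
  | zero => exact mul_le_mul_of_nonneg_left ht.2 hα.le
  | succ i =>
    rw [pJones_succ, pJones_succ]
    exact intervalIntegral.integral_mono_interval le_rfl ht.1 ht.2
      (MeasureTheory.ae_restrict_of_forall_mem measurableSet_Ioc fun v hv =>
        (wrightRHS_nonneg_iff hα).2 (pJones_nonpos hα i (by linarith [hv.2])))
      ((continuous_wrightRHS α (continuous_pJones α i)).intervalIntegrable 0 1)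

variable {α' : ℝ}

theorem pJones_anti_of_nonpos (hα : 0 < α) (hαα' : α ≤ α') :
    ∀ i, ∀ t ≤ 0, pJones α' i t ≤ pJones α i t
  | 0, t, ht => mul_le_mul_of_nonpos_right hαα' ht
  | i + 1, t, ht => by
    simp only [pJones_succ]
    exact (integral_from_zero_le_of_le (continuous_wrightRHS α (continuous_pJones α i))
      (continuous_wrightRHS α' (continuous_pJones α' i)) fun v hv =>
        wrightRHS_le_wrightRHS hα.le hαα' (pJones_anti_of_nonpos hα hαα' i _ (by linarith))
          (pJones_nonpos hα i (by linarith))).1 t ht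

theorem pJones_mono_of_mem_Icc (hα : 0 < α) (hαα' : α ≤ α') :
    ∀ i, ∀ t ∈ Icc (0 : ℝ) 1, pJones α i t ≤ pJones α' i t
  | 0, t, ht => mul_le_mul_of_nonneg_right hαα' ht.1
  | i + 1, t, ht => by
    simp only [pJones_succ]
    exact (integral_from_zero_le_of_le (continuous_wrightRHS α (continuous_pJones α i))
      (continuous_wrightRHS α' (continuous_pJones α' i)) fun v hv =>
        wrightRHS_le_wrightRHS hα.le hαα' (pJones_anti_of_nonpos hα hαα' i _ (by linarith))
          (pJones_nonpos hα i (by linarith))).2 t ht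

theorem abs_pJones_le_abs_pJones (hα : 0 < α) (hαα' : α ≤ α') (i : ℕ) {t : ℝ} (ht : t ≤ 1) :
    |pJones α i t| ≤ |pJones α' i t| := by
  have hα' : 0 < α' := hα.trans_le hαα'
  rcases le_or_gt t 0 with h | h
  · rw [abs_of_nonpos (pJones_nonpos hα i h), abs_of_nonpos (pJones_nonpos hα' i h),
      neg_le_neg_iff]
    exact pJones_anti_of_nonpos hα hαα' i t h
  · rw [abs_of_pos (pJones_pos hα i t ⟨h, ht⟩), abs_of_pos (pJones_pos hα' i t ⟨h, ht⟩)]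
    exact pJones_mono_of_mem_Icc hα hαα' i t ⟨h.le, ht⟩

end pJones

namespace WrightSol

variable {α : ℝ} {x : ℝ → ℝ}

theorem pJones_bounds (hα : 0 < α) (hx : WrightSol α x) (hx0 : x 0 = 0) :
    ∀ i, (∀ t < 0, pJones α i t < x t) ∧ ∀ t ∈ Ioc (0 : ℝ) 1, x t < pJones α i t
  | 0 => by
    simpa [← hx.eq_integral hx0, pJones, mul_comm] using
      integral_from_zero_lt_of_lt (continuous_wrightRHS α hx.continuous) continuous_const
        fun v _ => wrightRHS_lt (y := x) (t := v) hα
  | i + 1 => by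
    simpa only [← hx.eq_integral hx0, ← pJones_succ] using
      integral_from_zero_lt_of_lt (continuous_wrightRHS α hx.continuous)
        (continuous_wrightRHS α (continuous_pJones α i)) fun v hv =>
          wrightRHS_lt_wrightRHS hα ((pJones_bounds hα hx hx0 i).1 _ (by linarith))

theorem lt_pJones_one (hα : 0 < α) (hx : WrightSol α x) (hx0 : x 0 = 0) (i : ℕ) {t : ℝ}
    (ht : 0 ≤ t) : x t < pJones α i 1 := by
  obtain ⟨T, hT, hmax⟩ :=
    isCompact_Icc.exists_isMaxOn (nonempty_Icc.2 ht) hx.continuous.continuousOn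
  refine (hmax ⟨ht, le_rfl⟩).trans_lt ?_
  by_contra! hle
  have hp : 0 < pJones α i 1 := pJones_pos hα i 1 ⟨one_pos, le_rfl⟩
  have hT0 : 0 < T := hT.1.lt_of_ne (by rintro rfl; linarith)
  have hdelay : x (T - 1) ≤ 0 := (wrightRHS_nonneg_iff hα).1 <|
    (hx T).nonneg_of_isMaxOn_Icc hT0 (hmax.on_subset (Icc_subset_Icc_right hT.2))
  obtain ⟨z, hz, hxz⟩ := intermediate_value_Icc (by linarith : T - 1 ≤ T)
    hx.continuous.continuousOn ⟨hdelay, by linarith⟩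
  have hzT : z < T := hz.2.lt_of_ne (by rintro rfl; linarith)
  have hu : T - z ∈ Ioc (0 : ℝ) 1 := ⟨by linarith, by linarith [hz.1]⟩
  have hlt := ((hx.comp_const_add z).pJones_bounds hα (by rwa [add_zero]) i).2 (T - z) hu
  rw [add_sub_cancel] at hlt
  linarith [pJones_le_pJones_one hα i (Ioc_subset_Icc_self hu)]

end WrightSol

theorem jones_max (α : ℝ) (hα : Real.exp (-1) < α) (x : ℝ → ℝ)
    (hX : InX x) (hW : WrightSol α x) :
    (∀ i : ℕ,
      (∀ t : ℝ, t < 0 → pJones α i t < x t) ∧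
      (∀ t ∈ Set.Ioc (0 : ℝ) 1, x t < pJones α i t) ∧
      (∀ t : ℝ, 0 ≤ t → x t < pJones α i 1)) ∧
    (∀ i : ℕ, ∀ t : ℝ, t ≤ 1 → ∀ α' : ℝ, α ≤ α' →
      |pJones α i t| ≤ |pJones α' i t|) := by
  have hα0 : 0 < α := (exp_pos _).trans hα
  have hx0 : x 0 = 0 := hX.2.1
  refine ⟨fun i => ?_, fun i t ht α' hαα' => abs_pJones_le_abs_pJones hα0 hαα' i ht⟩
  obtain ⟨hneg, hpos⟩ := hW.pJones_bounds hα0 hx0 i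
  exact ⟨hneg, hpos, fun t ht => hW.lt_pJones_one hα0 hx0 i ht⟩
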